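/- arXiv:1104.1811 — 2 statements merged into one kernel-verified Lean document; each statement's English description precedes it below -/
import Mathlib

section
/- Let ζ ≥ 0, let μ and ν be finite ζ-comparable measures on a measurable space X, let W ⊆ X be a measurable set with μ(W) > 0 and ν(W) > 0, and let f be of scaling type σ with f(x) > 0 for all x > 0. Let A, Ã : X × X → Set X be families of measurable subsets of X, and assume that the functions (p,q) ↦ α_μ(A(p,q), Ã(p,q)) and (p,q) ↦ α_ν(A(p,q), Ã(p,q)) are measurable with respect to the product σ-algebra on X × X. Then (1/f(ν(W))) · ∫_{W×W} α_ν(A(p,q), Ã(p,q)) d(ν⊗ν)(p,q) ≤ exp((4+σ)·ζ) · (1/f(μ(W))) · ∫_{W×W} α_μ(A(p,q), Ã(p,q)) d(μ⊗μ)(p,q). -/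
open MeasureTheory Real

open Classical in
/-- The discrepancy `α_μ(A,B) = μ(A △ B)/μ(A ∪ B)` when `0 < μ (A ∪ B) < ∞`, and `0`
otherwise. -/
noncomputable def disc {X : Type*} [MeasurableSpace X] (μ : Measure X) (A B : Set X) : ℝ :=
  if 0 < μ (A ∪ B) ∧ μ (A ∪ B) < ⊤ then (μ (symmDiff A B)).toReal / (μ (A ∪ B)).toReal else 0

/-- Two measures are `ζ`-comparable if each is bounded by `exp ζ` times the other on all
measurable sets. -/
def Comparable {X : Type*} [MeasurableSpace X] (ζ : ℝ) (μ ν : Measure X) : Prop :=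
  ∀ S : Set X, MeasurableSet S →
    μ S ≤ ENNReal.ofReal (Real.exp ζ) * ν S ∧ ν S ≤ ENNReal.ofReal (Real.exp ζ) * μ S

/-- `f` is of scaling type `σ`: nonnegative and monotone nondecreasing on `[0,∞)`, with
`f (a·x) ≤ a^σ · f x` for all `a ≥ 1` and `x ≥ 0`. -/
def ScalingType (f : ℝ → ℝ) (σ : ℝ) : Prop :=
  (∀ x ≥ (0 : ℝ), 0 ≤ f x) ∧ MonotoneOn f (Set.Ici 0) ∧
    ∀ a ≥ (1 : ℝ), ∀ x ≥ (0 : ℝ), f (a * x) ≤ a ^ σ * f x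

/-!
Comparability passes to products and restrictions, so `ν ⊗ ν ≤ e^{2ζ} • μ ⊗ μ` on `W ×ˢ W`.
Pointwise, `α_ν ≤ e^{2ζ} α_μ`: the numerator `ν (A △ B)` gains at most `e^ζ` and the denominator
`ν (A ∪ B)` loses at most `e^ζ`. Together this gives `e^{4ζ}` for the integrals. Finally
`μ W ≤ e^ζ ν W`, monotonicity and scaling give `f (μ W) ≤ e^{σζ} f (ν W)`, the last factor.
-/

lemma disc_nonneg {X : Type*} [MeasurableSpace X] (μ : Measure X) (A B : Set X) :
    0 ≤ disc μ A B := by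
  unfold disc
  split <;> positivity

lemma disc_le_one {X : Type*} [MeasurableSpace X] (μ : Measure X) (A B : Set X) :
    disc μ A B ≤ 1 := by
  unfold disc
  split
  case isTrue h =>
    exact div_le_one_of_le₀ (ENNReal.toReal_mono h.2.ne (measure_mono Set.symmDiff_subset_union))
      ENNReal.toReal_nonneg
  case isFalse => exact zero_le_one

/-- For a finite measure the guard in `disc` is redundant: when `μ (A ∪ B) = 0` the quotient is
already the junk value `x / 0 = 0`. -/
lemma disc_eq_toReal_div {X : Type*} [MeasurableSpace X] (μ : Measure X) [IsFiniteMeasure μ]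
    (A B : Set X) : disc μ A B = (μ (symmDiff A B)).toReal / (μ (A ∪ B)).toReal := by
  unfold disc
  split_ifs with h
  · rfl
  · have hU : μ (A ∪ B) = 0 := by
      simpa [pos_iff_ne_zero, measure_lt_top] using h
    simp [hU]

lemma integrable_disc {X Y : Type*} [MeasurableSpace X] [MeasurableSpace Y] (μ : Measure X)
    (ρ : Measure Y) [IsFiniteMeasure ρ] {A B : Y → Set X}
    (hm : Measurable fun y => disc μ (A y) (B y)) :
    Integrable (fun y => disc μ (A y) (B y)) ρ :=
  Integrable.of_bound hm.aestronglyMeasurable 1 (ae_of_all _ fun y => by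
    rw [Real.norm_of_nonneg (disc_nonneg _ _ _)]
    exact disc_le_one _ _ _)

lemma ScalingType.le_rpow_mul {f : ℝ → ℝ} {σ : ℝ} (hf : ScalingType f σ) {a x y : ℝ}
    (ha : 1 ≤ a) (hx : 0 ≤ x) (hy : 0 ≤ y) (hxy : x ≤ a * y) : f x ≤ a ^ σ * f y :=
  (hf.2.1 (Set.mem_Ici.2 hx) (Set.mem_Ici.2 (by positivity)) hxy).trans (hf.2.2 a ha y hy)

namespace Comparable

variable {X : Type*} [MeasurableSpace X] {ζ : ℝ} {μ ν : Measure X}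

lemma symm (h : Comparable ζ μ ν) : Comparable ζ ν μ :=
  fun S hS => (h S hS).symm

lemma iff_le_smul :
    Comparable ζ μ ν ↔ μ ≤ ENNReal.ofReal (exp ζ) • ν ∧ ν ≤ ENNReal.ofReal (exp ζ) • μ := by
  simp only [Comparable, Measure.le_iff, Measure.smul_apply, smul_eq_mul, imp_and, forall_and]

lemma restrict (h : Comparable ζ μ ν) (s : Set X) :
    Comparable ζ (μ.restrict s) (ν.restrict s) := by
  obtain ⟨hμν, hνμ⟩ := iff_le_smul.1 h
  refine iff_le_smul.2 ⟨?_, ?_⟩ <;> rw [← Measure.restrict_smul]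
  exacts [Measure.restrict_mono le_rfl hμν, Measure.restrict_mono le_rfl hνμ]

lemma prod {Y : Type*} [MeasurableSpace Y] {ζ' : ℝ} {μ' ν' : Measure Y}
    [SFinite μ] [SFinite ν] [SFinite μ'] [SFinite ν']
    (h : Comparable ζ μ ν) (h' : Comparable ζ' μ' ν') :
    Comparable (ζ + ζ') (μ.prod μ') (ν.prod ν') := by
  obtain ⟨hμν, hνμ⟩ := iff_le_smul.1 h
  obtain ⟨hμν', hνμ'⟩ := iff_le_smul.1 h'
  have hsmul :
      ENNReal.ofReal (exp (ζ + ζ')) = ENNReal.ofReal (exp ζ) * ENNReal.ofReal (exp ζ') := by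
    rw [exp_add, ENNReal.ofReal_mul (exp_pos ζ).le]
  refine iff_le_smul.2 ⟨?_, ?_⟩
  · calc μ.prod μ' ≤ (ENNReal.ofReal (exp ζ) • ν).prod (ENNReal.ofReal (exp ζ') • ν') :=
          Measure.prod_mono hμν hμν'
      _ = _ := by rw [Measure.prod_smul_left, Measure.prod_smul_right, smul_smul, hsmul]
  · calc ν.prod ν' ≤ (ENNReal.ofReal (exp ζ) • μ).prod (ENNReal.ofReal (exp ζ') • μ') :=
          Measure.prod_mono hνμ hνμ'
      _ = _ := by rw [Measure.prod_smul_left, Measure.prod_smul_right, smul_smul, hsmul]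

lemma toReal_le [IsFiniteMeasure ν] (h : Comparable ζ μ ν) {S : Set X} (hS : MeasurableSet S) :
    (μ S).toReal ≤ exp ζ * (ν S).toReal := by
  simpa [ENNReal.toReal_mul, (exp_pos ζ).le] using
    ENNReal.toReal_mono (ENNReal.mul_ne_top ENNReal.ofReal_ne_top (measure_ne_top ν S)) (h S hS).1

lemma integral_le (h : Comparable ζ μ ν) {g : X → ℝ} (hg₀ : 0 ≤ g) (hg : Integrable g μ) :
    ∫ x, g x ∂ν ≤ exp ζ * ∫ x, g x ∂μ := by
  have hνμ := (iff_le_smul.1 h).2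
  calc ∫ x, g x ∂ν ≤ ∫ x, g x ∂(ENNReal.ofReal (exp ζ) • μ) :=
        integral_mono_measure hνμ (ae_of_all _ hg₀) (hg.smul_measure ENNReal.ofReal_ne_top)
    _ = exp ζ * ∫ x, g x ∂μ := by
        rw [integral_smul_measure, ENNReal.toReal_ofReal (exp_pos ζ).le, smul_eq_mul]

lemma disc_le [IsFiniteMeasure μ] [IsFiniteMeasure ν] (h : Comparable ζ μ ν) {A B : Set X}
    (hA : MeasurableSet A) (hB : MeasurableSet B) :
    disc ν A B ≤ exp (2 * ζ) * disc μ A B := by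
  rw [disc_eq_toReal_div, disc_eq_toReal_div]
  set dν := (ν (symmDiff A B)).toReal
  set dμ := (μ (symmDiff A B)).toReal
  set uν := (ν (A ∪ B)).toReal
  set uμ := (μ (A ∪ B)).toReal
  rcases (show 0 ≤ uν from ENNReal.toReal_nonneg).eq_or_lt with huν | huν
  · rw [← huν, div_zero]
    positivity
  have hd : dν ≤ exp ζ * dμ := h.symm.toReal_le (hA.symmDiff hB)
  have hu : uμ ≤ exp ζ * uν := h.toReal_le (hA.union hB)
  have huμ : 0 < uμ := pos_of_mul_pos_right (huν.trans_le (h.symm.toReal_le (hA.union hB)))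
    (exp_pos ζ).le
  rw [div_le_iff₀ huν]
  calc dν ≤ exp ζ * dμ := hd
    _ = exp ζ * (dμ / uμ) * uμ := by field_simp
    _ ≤ exp ζ * (dμ / uμ) * (exp ζ * uν) := by gcongr
    _ = exp (2 * ζ) * (dμ / uμ) * uν := by rw [two_mul, exp_add]; ring

end Comparable

theorem causal_distance_symmetry_estimate_general {X : Type*} [MeasurableSpace X]
    (ζ σ : ℝ) (hζ : 0 ≤ ζ)
    (μ ν : Measure X) [IsFiniteMeasure μ] [IsFiniteMeasure ν]
    (hcomp : Comparable ζ μ ν)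
    (W : Set X) (hW : MeasurableSet W) (hμW : 0 < μ W)
    (f : ℝ → ℝ) (hf : ScalingType f σ) (hfpos : ∀ x > (0 : ℝ), 0 < f x)
    (A A' : X → X → Set X)
    (hA : ∀ p q, MeasurableSet (A p q)) (hA' : ∀ p q, MeasurableSet (A' p q))
    (hm1 : Measurable fun pq : X × X => disc μ (A pq.1 pq.2) (A' pq.1 pq.2)) :
    (1 / f (ν W).toReal) *
        ∫ pq in W ×ˢ W, disc ν (A pq.1 pq.2) (A' pq.1 pq.2) ∂(ν.prod ν) ≤
      Real.exp ((4 + σ) * ζ) *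
        ((1 / f (μ W).toReal) *
          ∫ pq in W ×ˢ W, disc μ (A pq.1 pq.2) (A' pq.1 pq.2) ∂(μ.prod μ)) := by
  set Iν := ∫ pq in W ×ˢ W, disc ν (A pq.1 pq.2) (A' pq.1 pq.2) ∂(ν.prod ν)
  set Iμ := ∫ pq in W ×ˢ W, disc μ (A pq.1 pq.2) (A' pq.1 pq.2) ∂(μ.prod μ)
  have hcomp₂ := (hcomp.prod hcomp).restrict (W ×ˢ W)
  have hI : Iν ≤ exp (4 * ζ) * Iμ := calc
    Iν ≤ ∫ pq in W ×ˢ W, exp (2 * ζ) * disc μ (A pq.1 pq.2) (A' pq.1 pq.2) ∂(ν.prod ν) :=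
        integral_mono_of_nonneg (ae_of_all _ fun _ => disc_nonneg _ _ _)
          ((integrable_disc μ _ hm1).const_mul _)
          (ae_of_all _ fun pq => hcomp.disc_le (hA pq.1 pq.2) (hA' pq.1 pq.2))
    _ = exp (2 * ζ) * ∫ pq in W ×ˢ W, disc μ (A pq.1 pq.2) (A' pq.1 pq.2) ∂(ν.prod ν) :=
        integral_const_mul _ _
    _ ≤ exp (2 * ζ) * (exp (ζ + ζ) * Iμ) := by
        gcongr
        exact hcomp₂.integral_le (fun _ => disc_nonneg _ _ _) (integrable_disc μ _ hm1)
    _ = exp (4 * ζ) * Iμ := by rw [← mul_assoc, ← exp_add]; ring_nf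
  have hμW' : 0 < (μ W).toReal := ENNReal.toReal_pos hμW.ne' (measure_ne_top μ W)
  have hfW : f (μ W).toReal ≤ exp (σ * ζ) * f (ν W).toReal := by
    rw [mul_comm σ, exp_mul]
    exact hf.le_rpow_mul (one_le_exp hζ) hμW'.le ENNReal.toReal_nonneg (hcomp.toReal_le hW)
  have hfμ := hfpos _ hμW'
  have hfν := pos_of_mul_pos_right (hfμ.trans_le hfW) (exp_pos _).le
  have hIμ : 0 ≤ Iμ := integral_nonneg fun _ => disc_nonneg _ _ _
  calc 1 / f (ν W).toReal * Iν ≤ 1 / f (ν W).toReal * (exp (4 * ζ) * Iμ) := by gcongr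
    _ ≤ exp (σ * ζ) / f (μ W).toReal * (exp (4 * ζ) * Iμ) := by
        refine mul_le_mul_of_nonneg_right ?_ (by positivity)
        rw [div_le_div_iff₀ hfν hfμ]
        linarith
    _ = _ := by rw [add_mul, exp_add]; field_simp

theorem causal_distance_symmetry_estimate {X : Type*} [MeasurableSpace X]
    (ζ σ : ℝ) (hζ : 0 ≤ ζ) (hσ : 1 ≤ σ)
    (μ ν : Measure X) [IsFiniteMeasure μ] [IsFiniteMeasure ν]
    (hcomp : Comparable ζ μ ν)
    (W : Set X) (hW : MeasurableSet W) (hμW : 0 < μ W) (hνW : 0 < ν W)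
    (f : ℝ → ℝ) (hf : ScalingType f σ) (hfpos : ∀ x > (0 : ℝ), 0 < f x)
    (A A' : X → X → Set X)
    (hA : ∀ p q, MeasurableSet (A p q)) (hA' : ∀ p q, MeasurableSet (A' p q))
    (hm1 : Measurable fun pq : X × X => disc μ (A pq.1 pq.2) (A' pq.1 pq.2))
    (hm2 : Measurable fun pq : X × X => disc ν (A pq.1 pq.2) (A' pq.1 pq.2)) :
    (1 / f (ν W).toReal) *
        ∫ pq in W ×ˢ W, disc ν (A pq.1 pq.2) (A' pq.1 pq.2) ∂(ν.prod ν) ≤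
      Real.exp ((4 + σ) * ζ) *
        ((1 / f (μ W).toReal) *
          ∫ pq in W ×ˢ W, disc μ (A pq.1 pq.2) (A' pq.1 pq.2) ∂(μ.prod μ)) :=
  causal_distance_symmetry_estimate_general ζ σ hζ μ ν hcomp W hW hμW f hf hfpos A A' hA hA' hm1
end

section
/- Let ζ ≥ 0, let μ and ν be finite ζ-comparable measures on a measurable space X, and let A, B, C ⊆ X be measurable sets with μ(A ∪ B) > 0 and ν(B ∪ C) > 0. Set a = μ(A △ B)/μ(A ∪ B) and b = ν(B △ C)/ν(B ∪ C), and assume a < 1 and b < 1. Then μ(A ∪ C) ≥ (1 − a)·μ(A ∪ B) > 0, and μ(A △ C)/μ(A ∪ C) ≤ a/(1 − a) + exp(2ζ)·b/(1 − b). -/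
open MeasureTheory Real

lemma toReal_add_le' {x y z : ENNReal} (h : x ≤ y + z) (hy : y ≠ ⊤) (hz : z ≠ ⊤) :
    x.toReal ≤ y.toReal + z.toReal := by
  rw [← ENNReal.toReal_add hy hz]
  exact ENNReal.toReal_mono (ENNReal.add_ne_top.2 ⟨hy, hz⟩) h

theorem pointwise_transitivity_estimate {X : Type*} [MeasurableSpace X]
    (ζ : ℝ) (hζ : 0 ≤ ζ)
    (μ ν : Measure X) [IsFiniteMeasure μ] [IsFiniteMeasure ν]
    (hcomp : Comparable ζ μ ν)
    (A B C : Set X) (hA : MeasurableSet A) (hB : MeasurableSet B) (hC : MeasurableSet C)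
    (hAB : 0 < μ (A ∪ B)) (hBC : 0 < ν (B ∪ C))
    (a b : ℝ)
    (ha : a = (μ (symmDiff A B)).toReal / (μ (A ∪ B)).toReal)
    (hb : b = (ν (symmDiff B C)).toReal / (ν (B ∪ C)).toReal)
    (ha1 : a < 1) (hb1 : b < 1) :
    (1 - a) * (μ (A ∪ B)).toReal ≤ (μ (A ∪ C)).toReal ∧
      0 < (1 - a) * (μ (A ∪ B)).toReal ∧
      (μ (symmDiff A C)).toReal / (μ (A ∪ C)).toReal ≤
        a / (1 - a) + Real.exp (2 * ζ) * (b / (1 - b)) := by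
  set rAB := (μ (A ∪ B)).toReal with hrAB
  set sAB := (μ (symmDiff A B)).toReal with hsAB
  set rAC := (μ (A ∪ C)).toReal with hrAC
  set sAC := (μ (symmDiff A C)).toReal with hsAC
  set nBC := (ν (B ∪ C)).toReal with hnBC
  set tBC := (ν (symmDiff B C)).toReal with htBC
  have hrABpos : 0 < rAB := ENNReal.toReal_pos hAB.ne' (measure_ne_top _ _)
  have hnBCpos : 0 < nBC := ENNReal.toReal_pos hBC.ne' (measure_ne_top _ _)
  have ha0 : 0 ≤ a := ha ▸ div_nonneg ENNReal.toReal_nonneg ENNReal.toReal_nonneg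
  have hb0 : 0 ≤ b := hb ▸ div_nonneg ENNReal.toReal_nonneg ENNReal.toReal_nonneg
  have hsABa : sAB = a * rAB := by rw [ha, div_mul_cancel₀ _ hrABpos.ne']
  have htBCb : tBC = b * nBC := by rw [hb, div_mul_cancel₀ _ hnBCpos.ne']
  -- rAB ≤ μ(A∩B) + sAB
  have h1 : rAB ≤ (μ (A ∩ B)).toReal + sAB := by
    refine toReal_add_le' ?_ (measure_ne_top _ _) (measure_ne_top _ _)
    refine le_trans (measure_mono ?_) (measure_union_le _ _)
    rw [Set.union_comm (A ∩ B)]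
    exact (symmDiff_sup_inf A B).ge
  have h2 : (μ (A ∩ B)).toReal ≤ rAC :=
    ENNReal.toReal_mono (measure_ne_top _ _) (measure_mono (Set.inter_subset_left.trans Set.subset_union_left))
  have hae : (1 - a) * rAB = rAB - sAB := by rw [hsABa]; ring
  have key1 : (1 - a) * rAB ≤ rAC := by rw [hae]; linarith
  have hrACpos : 0 < rAC := lt_of_lt_of_le (mul_pos (by linarith) hrABpos) key1
  -- ν(B∪C) ≤ ν(B∩C) + tBC
  have h3 : nBC ≤ (ν (B ∩ C)).toReal + tBC := by
    refine toReal_add_le' ?_ (measure_ne_top _ _) (measure_ne_top _ _)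
    refine le_trans (measure_mono ?_) (measure_union_le _ _)
    rw [Set.union_comm (B ∩ C)]
    exact (symmDiff_sup_inf B C).ge
  -- comparability in real form
  have hcmp1 : (μ (symmDiff B C)).toReal ≤ Real.exp ζ * tBC := by
    have h := (hcomp _ (hB.symmDiff hC)).1
    have h' := ENNReal.toReal_mono (ENNReal.mul_ne_top ENNReal.ofReal_ne_top (measure_ne_top _ _)) h
    rwa [ENNReal.toReal_mul, ENNReal.toReal_ofReal (Real.exp_pos ζ).le] at h'
  have hcmp2 : (ν (B ∩ C)).toReal ≤ Real.exp ζ * (μ (B ∩ C)).toReal := by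
    have h := (hcomp _ (hB.inter hC)).2
    have h' := ENNReal.toReal_mono (ENNReal.mul_ne_top ENNReal.ofReal_ne_top (measure_ne_top _ _)) h
    rwa [ENNReal.toReal_mul, ENNReal.toReal_ofReal (Real.exp_pos ζ).le] at h'
  have h4 : (μ (B ∩ C)).toReal ≤ rAC :=
    ENNReal.toReal_mono (measure_ne_top _ _) (measure_mono (Set.inter_subset_right.trans Set.subset_union_right))
  -- sAC ≤ sAB + exp ζ * tBC
  have h5 : sAC ≤ sAB + Real.exp ζ * tBC := by
    have hsub : symmDiff A C ⊆ symmDiff A B ∪ symmDiff B C := by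
      intro x hx
      simp only [Set.mem_symmDiff, Set.mem_union] at hx ⊢
      tauto
    have hm : μ (symmDiff A C) ≤ μ (symmDiff A B) + μ (symmDiff B C) :=
      (measure_mono hsub).trans (measure_union_le _ _)
    have h' := toReal_add_le' hm (measure_ne_top _ _) (measure_ne_top _ _)
    exact h'.trans (by linarith [hcmp1])
  -- key2 : exp(-ζ) * ((1-b) * nBC) ≤ rAC
  have key2 : Real.exp (-ζ) * ((1 - b) * nBC) ≤ rAC := by
    have hν : (1 - b) * nBC ≤ (ν (B ∩ C)).toReal := by
      have : (1 - b) * nBC = nBC - tBC := by rw [htBCb]; ring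
      rw [this]; linarith
    have hμ : Real.exp (-ζ) * (ν (B ∩ C)).toReal ≤ (μ (B ∩ C)).toReal := by
      rw [Real.exp_neg, inv_mul_le_iff₀ (Real.exp_pos ζ)]
      exact hcmp2
    calc Real.exp (-ζ) * ((1 - b) * nBC) ≤ Real.exp (-ζ) * (ν (B ∩ C)).toReal := by
          exact mul_le_mul_of_nonneg_left hν (Real.exp_pos _).le
      _ ≤ (μ (B ∩ C)).toReal := hμ
      _ ≤ rAC := h4
  refine ⟨key1, mul_pos (by linarith) hrABpos, ?_⟩
  rw [div_le_iff₀ hrACpos]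
  have e1 : a * rAB ≤ a / (1 - a) * rAC := by
    have hane : (1:ℝ) - a ≠ 0 := by linarith
    have : a * rAB = a / (1 - a) * ((1 - a) * rAB) := by
      rw [div_mul_eq_mul_div, mul_comm (1 - a) rAB, ← mul_assoc, mul_div_assoc, div_self hane, mul_one]
    rw [this]
    exact mul_le_mul_of_nonneg_left key1 (div_nonneg ha0 (by linarith))
  have e2 : Real.exp ζ * (b * nBC) ≤ Real.exp (2 * ζ) * (b / (1 - b)) * rAC := by
    have hexp : Real.exp (2 * ζ) * Real.exp (-ζ) = Real.exp ζ := by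
      rw [← Real.exp_add]; ring_nf
    have hbne : (1:ℝ) - b ≠ 0 := by linarith
    have hc : b / (1 - b) * ((1 - b) * nBC) = b * nBC := by
      rw [div_mul_eq_mul_div, mul_comm (1 - b) nBC, ← mul_assoc, mul_div_assoc, div_self hbne, mul_one]
    have : Real.exp ζ * (b * nBC)
        = Real.exp (2 * ζ) * (b / (1 - b)) * (Real.exp (-ζ) * ((1 - b) * nBC)) := by
      rw [show Real.exp (2 * ζ) * (b / (1 - b)) * (Real.exp (-ζ) * ((1 - b) * nBC))
          = Real.exp (2 * ζ) * Real.exp (-ζ) * (b / (1 - b) * ((1 - b) * nBC)) from by ring,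
        hexp, hc]
    rw [this]
    exact mul_le_mul_of_nonneg_left key2
      (mul_nonneg (Real.exp_pos _).le (div_nonneg hb0 (by linarith)))
  calc sAC ≤ a * rAB + Real.exp ζ * (b * nBC) := by rw [← hsABa, ← htBCb]; exact h5
    _ ≤ (a / (1 - a) + Real.exp (2 * ζ) * (b / (1 - b))) * rAC := by
        rw [add_mul]; exact add_le_add e1 e2
end
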